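/- Let E and F be Dedekind complete Riesz spaces with weak order units e and f. Every component u of e ⊗ f in the Dedekind completion of the Fremlin tensor product E ⊗̄ F satisfies u = sup { p ⊗ q : p a component of e, q a component of f, p ⊗ q ≤ u }. -/

import Mathlib

open Finset

section Defs

variable {E : Type*} [ConditionallyCompleteLattice E] [AddCommGroup E] [Module ℝ E]
  [CovariantClass E E (· + ·) (· ≤ ·)]

/-- Order convergence of a sequence: there is a sequence `u ↓ 0` dominating the tails. -/
def OrderConvergesTo (f : ℕ → E) (x : E) : Prop :=
  ∃ u : ℕ → E, Antitone u ∧ IsGLB (Set.range u) (0 : E) ∧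
    ∀ m : ℕ, ∃ N : ℕ, ∀ n ≥ N, |f n - x| ≤ u m

/-- `p` is a component of `e`. -/
def IsComponent (e p : E) : Prop := 0 ≤ p ∧ p ≤ e ∧ p ⊓ (e - p) = 0

/-- A sequence of components is of density zero if its Cesàro means order converge to `0`. -/
def DensityZero (p : ℕ → E) : Prop :=
  OrderConvergesTo (fun n => (n : ℝ)⁻¹ • ∑ k ∈ Finset.range n, p k) (0 : E)

/-- The band projection (onto the band generated by `p`) applied to a positive element `f`. -/
noncomputable def bandProj (p f : E) : E :=
  sSup (Set.range fun n : ℕ => f ⊓ (n : ℝ) • p)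

end Defs

section Systems

variable (E : Type*) [ConditionallyCompleteLattice E] [AddCommGroup E] [Module ℝ E]
  [CovariantClass E E (· + ·) (· ≤ ·)]

/-- The data of a conditional expectation preserving system, without the
intertwining identity `T S = T`: a Dedekind complete Riesz space with weak order unit `e`,
the `f`-algebra multiplication of `E_e` (with unit `e`), a strictly-positive-free
conditional expectation operator `T` with `T e = e`, and a Riesz homomorphism `S`
with `S e = e`. -/
structure PreCEPS where
  e : E
  e_pos : 0 < e
  weakUnit : ∀ x : E, e ⊓ |x| = 0 → x = 0
  /-- the `f`-algebra multiplication (of the ideal generated by `e`) -/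
  mul : E →ₗ[ℝ] E →ₗ[ℝ] E
  mul_comm' : ∀ x y, mul x y = mul y x
  mul_pos' : ∀ x y, 0 ≤ x → 0 ≤ y → 0 ≤ mul x y
  one_mul' : ∀ x, mul e x = x
  finf' : ∀ x y z, x ⊓ y = 0 → 0 ≤ z → (mul x z) ⊓ y = 0
  /-- the conditional expectation operator -/
  T : E →ₗ[ℝ] E
  T_pos : ∀ x, 0 ≤ x → 0 ≤ T x
  T_proj : ∀ x, T (T x) = T x
  T_e : T e = e
  T_oc : ∀ (s : Set E) (x : E), s.Nonempty → DirectedOn (· ≤ ·) s → IsLUB s x →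
    IsLUB (T '' s) (T x)
  T_range_closed : ∀ (s : Set E) (x : E), (∀ y ∈ s, T y = y) → IsLUB s x → T x = x
  /-- the Riesz homomorphism -/
  S : E →ₗ[ℝ] E
  S_sup : ∀ x y, S (x ⊔ y) = S x ⊔ S y
  S_e : S e = e

/-- A conditional expectation preserving system. -/
structure CEPS extends PreCEPS E where
  TS : ∀ x, T (S x) = T x

variable {E}

/-- Strict positivity of the conditional expectation operator of a system. -/
def CEPS.StrictPos (A : CEPS E) : Prop := ∀ x : E, 0 ≤ x → A.T x = 0 → x = 0

/-- Ergodicity, characterised by Cesàro convergence of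
`T((S^k p)·q)` to `Tp·Tq` for all components `p, q` of `e`. -/
def CEPS.Ergodic (A : CEPS E) : Prop :=
  ∀ p q : E, IsComponent A.e p → IsComponent A.e q →
    OrderConvergesTo
      (fun n => (n : ℝ)⁻¹ • ∑ k ∈ Finset.range n, A.T (A.mul ((A.S ^ k) p) q))
      (A.mul (A.T p) (A.T q))

/-- Conditional weak mixing. -/
def CEPS.WeakMixing (A : CEPS E) : Prop :=
  ∀ p q : E, IsComponent A.e p → IsComponent A.e q →
    OrderConvergesTo
      (fun n => (n : ℝ)⁻¹ • ∑ k ∈ Finset.range n,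
        |A.T (A.mul ((A.S ^ k) p) q) - A.mul (A.T p) (A.T q)|) (0 : E)

end Systems

section Tensor

variable {E F G : Type*}
  [ConditionallyCompleteLattice E] [AddCommGroup E] [Module ℝ E]
  [CovariantClass E E (· + ·) (· ≤ ·)]
  [ConditionallyCompleteLattice F] [AddCommGroup F] [Module ℝ F]
  [CovariantClass F F (· + ·) (· ≤ ·)]
  [ConditionallyCompleteLattice G] [AddCommGroup G] [Module ℝ G]
  [CovariantClass G G (· + ·) (· ≤ ·)]

/-- A realisation of the Dedekind completion of the Fremlin tensor product of the
underlying spaces of two conditional expectation preserving systems, carrying the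
pre-system structure (Grobler's tensor product conditional expectation and the tensor
product Riesz homomorphism), but without the intertwining identity for the product. -/
structure TensorPreCEPS (A : CEPS E) (B : CEPS F) (G : Type*)
    [ConditionallyCompleteLattice G] [AddCommGroup G] [Module ℝ G]
    [CovariantClass G G (· + ·) (· ≤ ·)] where
  sys : PreCEPS G
  tmul : E →ₗ[ℝ] F →ₗ[ℝ] G
  tmul_pos : ∀ x y, 0 ≤ x → 0 ≤ y → 0 ≤ tmul x y
  e_def : sys.e = tmul A.e B.e
  T_tmul : ∀ x y, sys.T (tmul x y) = tmul (A.T x) (B.T y)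
  S_tmul : ∀ x y, sys.S (tmul x y) = tmul (A.S x) (B.S y)
  mul_tmul : ∀ x y x' y',
    sys.mul (tmul x y) (tmul x' y') = tmul (A.mul x x') (B.mul y y')
  comp_dense : ∀ u : G, IsComponent sys.e u →
    IsLUB {w : G | ∃ p q, IsComponent A.e p ∧ IsComponent B.e q ∧
      tmul p q ≤ u ∧ w = tmul p q} u
  tmul_oc_left : ∀ (x : ℕ → E) (a : E) (y : F), 0 ≤ y →
    OrderConvergesTo x a → OrderConvergesTo (fun n => tmul (x n) y) (tmul a y)
  tmul_oc_right : ∀ (x : E) (y : ℕ → F) (b : F), 0 ≤ x →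
    OrderConvergesTo y b → OrderConvergesTo (fun n => tmul x (y n)) (tmul x b)

/-- As `TensorPreCEPS`, but where the tensor product system is a full conditional
expectation preserving system. -/
structure TensorCEPS (A : CEPS E) (B : CEPS F) (G : Type*)
    [ConditionallyCompleteLattice G] [AddCommGroup G] [Module ℝ G]
    [CovariantClass G G (· + ·) (· ≤ ·)] where
  sys : CEPS G
  tmul : E →ₗ[ℝ] F →ₗ[ℝ] G
  tmul_pos : ∀ x y, 0 ≤ x → 0 ≤ y → 0 ≤ tmul x y
  e_def : sys.e = tmul A.e B.e
  T_tmul : ∀ x y, sys.T (tmul x y) = tmul (A.T x) (B.T y)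
  S_tmul : ∀ x y, sys.S (tmul x y) = tmul (A.S x) (B.S y)
  mul_tmul : ∀ x y x' y',
    sys.mul (tmul x y) (tmul x' y') = tmul (A.mul x x') (B.mul y y')
  comp_dense : ∀ u : G, IsComponent sys.e u →
    IsLUB {w : G | ∃ p q, IsComponent A.e p ∧ IsComponent B.e q ∧
      tmul p q ≤ u ∧ w = tmul p q} u
  tmul_oc_left : ∀ (x : ℕ → E) (a : E) (y : F), 0 ≤ y →
    OrderConvergesTo x a → OrderConvergesTo (fun n => tmul (x n) y) (tmul a y)
  tmul_oc_right : ∀ (x : E) (y : ℕ → F) (b : F), 0 ≤ x →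
    OrderConvergesTo y b → OrderConvergesTo (fun n => tmul x (y n)) (tmul x b)

end Tensor

/-!
Let `b` bound every `p ⊗ q ≤ u` from above and suppose `u ≰ b`. Order density gives
`0 < x ⊗ y ≤ u - u ⊓ b`. For some `m` the truncations `x₁ = (m x - e)⁺`, `y₁ = (m y - f)⁺` still
have `x₁ ⊗ y₁ ≠ 0`: otherwise `m (x ⊗ y) ≤ x ⊗ f + e ⊗ y` for all `m`, against the Archimedean
property. The band projections `p` of `e` onto `{x₁}ᵈᵈ` and `q` of `f` onto `{y₁}ᵈᵈ` are components
with `p ≤ m x`, `q ≤ m y`, and `p ⊗ q ≠ 0` because it dominates `(e ⊗ f) ⊓ (x₁ ⊗ y₁)`, which is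
nonzero as `e ⊗ f` is a weak unit. Since `u` is a component and `p ⊗ q ≤ m² (x ⊗ y) ≤ m² u`, also
`p ⊗ q ≤ u`, so `p ⊗ q ≤ u ⊓ b`. Then the nonzero `p ⊗ q` lies below `m² (u - u ⊓ b)` although
it is disjoint from `u - u ⊓ b`. Truncating before projecting is what puts `p ⊗ q` below
`m² (x ⊗ y)`; projecting onto `{x}ᵈᵈ` directly would need order continuity of `⊗`.
-/

lemma inf_eq_zero_of_le_of_le {L : Type*} [Lattice L] [Zero L] {a b a' b' : L} (ha' : 0 ≤ a')
    (hb' : 0 ≤ b') (haa : a' ≤ a) (hbb : b' ≤ b) (h : a ⊓ b = 0) : a' ⊓ b' = 0 :=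
  le_antisymm (h ▸ inf_le_inf haa hbb) (le_inf ha' hb')

section LatticeOrderedGroup

variable {L : Type*} [Lattice L] [AddCommGroup L] [AddLeftMono L] {a b c : L}

lemma inf_add_le_inf_add_inf (ha : 0 ≤ a) (hb : 0 ≤ b) (hc : 0 ≤ c) :
    a ⊓ (b + c) ≤ a ⊓ b + a ⊓ c := by
  rw [add_inf a c (a ⊓ b), inf_add a b a, inf_add a b c]
  exact le_inf (le_inf (inf_le_left.trans (le_add_of_nonneg_right ha))
      (inf_le_left.trans (le_add_of_nonneg_left hb)))
    (le_inf (inf_le_left.trans (le_add_of_nonneg_right hc)) inf_le_right)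

lemma inf_add_eq_zero (ha : 0 ≤ a) (hb : 0 ≤ b) (hc : 0 ≤ c) (hab : a ⊓ b = 0)
    (hac : a ⊓ c = 0) : a ⊓ (b + c) = 0 :=
  le_antisymm (by simpa [hab, hac] using inf_add_le_inf_add_inf ha hb hc)
    (le_inf ha (add_nonneg hb hc))

lemma le_of_le_add_of_inf_eq_zero (ha : 0 ≤ a) (hb : 0 ≤ b) (hc : 0 ≤ c) (h : a ≤ b + c)
    (hac : a ⊓ c = 0) : a ≤ b :=
  calc a = a ⊓ (b + c) := (inf_eq_left.2 h).symm
    _ ≤ a ⊓ b + a ⊓ c := inf_add_le_inf_add_inf ha hb hc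
    _ = a ⊓ b := by rw [hac, add_zero]
    _ ≤ b := inf_le_right

lemma inf_nsmul_le_nsmul_inf (ha : 0 ≤ a) (hb : 0 ≤ b) : ∀ n : ℕ, a ⊓ n • b ≤ n • (a ⊓ b)
  | 0 => by simp [inf_eq_right.2 ha]
  | n + 1 =>
    calc a ⊓ (n + 1) • b = a ⊓ (n • b + b) := by rw [succ_nsmul]
      _ ≤ a ⊓ n • b + a ⊓ b := inf_add_le_inf_add_inf ha (nsmul_nonneg hb n) hb
      _ ≤ n • (a ⊓ b) + a ⊓ b := add_le_add_left (inf_nsmul_le_nsmul_inf ha hb n) _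
      _ = (n + 1) • (a ⊓ b) := (succ_nsmul _ n).symm

lemma inf_nsmul_eq_zero (ha : 0 ≤ a) (hb : 0 ≤ b) (h : a ⊓ b = 0) (n : ℕ) : a ⊓ n • b = 0 :=
  le_antisymm (by simpa [h] using inf_nsmul_le_nsmul_inf ha hb n)
    (le_inf ha (nsmul_nonneg hb n))

lemma nsmul_inf_eq_zero (ha : 0 ≤ a) (hb : 0 ≤ b) (h : a ⊓ b = 0) (n : ℕ) : n • a ⊓ b = 0 := by
  rw [inf_comm] at h ⊢
  exact inf_nsmul_eq_zero hb ha h n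

lemma nsmul_inf_nsmul_eq_zero (ha : 0 ≤ a) (hb : 0 ≤ b) (h : a ⊓ b = 0) (j k : ℕ) :
    j • a ⊓ k • b = 0 :=
  inf_nsmul_eq_zero (nsmul_nonneg ha j) hb (nsmul_inf_eq_zero ha hb h j) k

lemma le_of_nsmul_le_nsmul {n : ℕ} (hn : n ≠ 0) (h : n • a ≤ n • b) : a ≤ b := by
  set t := a - b
  have hdisj : n • t⁺ ⊓ n • t⁻ = 0 := nsmul_inf_nsmul_eq_zero (posPart_nonneg t)
    (negPart_nonneg t) (posPart_inf_negPart_eq_zero t) n n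
  have hle : n • t⁺ ≤ n • t⁻ := by
    have : n • t ≤ 0 := by rw [nsmul_sub]; exact sub_nonpos.2 h
    rwa [← posPart_sub_negPart t, nsmul_sub, sub_nonpos] at this
  have ht : t⁺ ≤ 0 :=
    (le_self_nsmul (posPart_nonneg t) hn).trans ((inf_eq_left.2 hle).symm.trans hdisj).le
  exact sub_nonpos.1 ((le_posPart t).trans ht)

lemma posPart_sub_inf_posPart_sub (a b : L) : (a - b)⁺ ⊓ (b - a)⁺ = 0 := by
  simpa [negPart_def, posPart_def] using posPart_inf_negPart_eq_zero (a - b)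

lemma sub_inf_eq_posPart_sub (a b : L) : a - a ⊓ b = (a - b)⁺ := by
  rw [sub_inf, sub_self, posPart_def, sup_comm]

lemma inf_nsmul_posPart_sub_le (ha : 0 ≤ a) (hb : 0 ≤ b) (n : ℕ) : a ⊓ n • (b - a)⁺ ≤ b := by
  have h0 : 0 ≤ a ⊓ n • (b - a)⁺ := le_inf ha (nsmul_nonneg (posPart_nonneg _) n)
  refine le_of_le_add_of_inf_eq_zero h0 hb (posPart_nonneg (a - b)) ?_ ?_
  · exact inf_le_left.trans (sub_le_iff_le_add'.1 (le_posPart (a - b)))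
  · refine inf_eq_zero_of_le_of_le h0 (posPart_nonneg _) inf_le_right le_rfl ?_
    exact nsmul_inf_eq_zero (posPart_nonneg _) (posPart_nonneg _)
      (by rw [inf_comm]; exact posPart_sub_inf_posPart_sub a b) n

end LatticeOrderedGroup

section ConditionallyComplete

variable {L : Type*} [ConditionallyCompleteLattice L] [AddCommGroup L]

lemma isComponent_zero {e : L} (he : 0 ≤ e) : IsComponent e 0 :=
  ⟨le_rfl, he, by rw [sub_zero, inf_eq_left.2 he]⟩

variable [AddLeftMono L]

lemma nonpos_of_forall_nsmul_le {a c : L} (h : ∀ n : ℕ, n • a ≤ c) : a ≤ 0 := by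
  have hbdd : BddAbove (Set.range fun n : ℕ => n • a) := ⟨c, Set.forall_mem_range.2 h⟩
  have : (⨆ n : ℕ, n • a) + a ≤ ⨆ n : ℕ, n • a := by
    rw [← le_sub_iff_add_le]
    exact ciSup_le fun n => le_sub_iff_add_le.2 (succ_nsmul a n ▸ le_ciSup hbdd (n + 1))
  exact (add_le_iff_nonpos_right _).1 this

lemma IsComponent.le_of_le_nsmul {w u v : L} (hu : IsComponent w u) (hv : 0 ≤ v) (hvw : v ≤ w)
    {n : ℕ} (hvu : v ≤ n • u) : v ≤ u := by
  have hwu : 0 ≤ w - u := sub_nonneg.2 hu.2.1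
  refine le_of_le_add_of_inf_eq_zero hv hu.1 hwu (by rwa [add_sub_cancel]) ?_
  exact inf_eq_zero_of_le_of_le hv hwu hvu le_rfl (nsmul_inf_eq_zero hu.1 hwu hu.2.2 n)

lemma IsComponent.inf_sub_eq_zero_of_le {w c u : L} (hc : IsComponent w c) (hcu : c ≤ u)
    (huw : u ≤ w) : c ⊓ (u - c) = 0 :=
  inf_eq_zero_of_le_of_le hc.1 (sub_nonneg.2 hcu) le_rfl (sub_le_sub_right huw c) hc.2.2

end ConditionallyComplete

section BandProjection

variable {L : Type*} [ConditionallyCompleteLattice L] [AddCommGroup L] [Module ℝ L] {e z : L}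

lemma bandProj_eq_ciSup (z e : L) : bandProj z e = ⨆ n : ℕ, e ⊓ n • z := by
  simp only [bandProj, Nat.cast_smul_eq_nsmul]
  rfl

lemma inf_nsmul_le_bandProj (z e : L) (n : ℕ) : e ⊓ n • z ≤ bandProj z e :=
  bandProj_eq_ciSup z e ▸
    le_ciSup (f := fun n : ℕ => e ⊓ n • z) ⟨e, Set.forall_mem_range.2 fun _ => inf_le_left⟩ n

lemma bandProj_le {M : L} (h : ∀ n : ℕ, e ⊓ n • z ≤ M) : bandProj z e ≤ M :=
  bandProj_eq_ciSup z e ▸ ciSup_le h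

lemma bandProj_le_self : bandProj z e ≤ e :=
  bandProj_le fun _ => inf_le_left

lemma bandProj_nonneg (he : 0 ≤ e) : 0 ≤ bandProj z e :=
  (le_inf he (zero_nsmul z).symm.le).trans (inf_nsmul_le_bandProj z e 0)

variable [AddLeftMono L]

lemma sub_bandProj_inf_eq_zero (he : 0 ≤ e) (hz : 0 ≤ z) : (e - bandProj z e) ⊓ z = 0 := by
  have hr : 0 ≤ e - bandProj z e := sub_nonneg.2 bandProj_le_self
  have hrz : 0 ≤ (e - bandProj z e) ⊓ z := le_inf hr hz
  refine le_antisymm (nonpos_of_forall_nsmul_le (c := e) fun n => ?_) hrz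
  -- `n ((e - bandProj z e) ⊓ z) ≤ n z ≤ e + (n z - e)⁺`, and `e - bandProj z e ≤ (e - n z)⁺`
  -- is disjoint from `(n z - e)⁺`
  have hle : (e - bandProj z e) ⊓ z ≤ (e - n • z)⁺ := inf_le_left.trans
    ((sub_le_sub_left (inf_nsmul_le_bandProj z e n) e).trans (sub_inf_eq_posPart_sub e _).le)
  refine le_of_le_add_of_inf_eq_zero (nsmul_nonneg hrz n) he (posPart_nonneg (n • z - e)) ?_ ?_
  · exact (nsmul_le_nsmul_right inf_le_right n).trans (sub_le_iff_le_add'.1 (le_posPart _))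
  · exact nsmul_inf_eq_zero hrz (posPart_nonneg _) (inf_eq_zero_of_le_of_le hrz
      (posPart_nonneg _) hle le_rfl (posPart_sub_inf_posPart_sub e (n • z))) n

lemma isComponent_bandProj (he : 0 ≤ e) (hz : 0 ≤ z) : IsComponent e (bandProj z e) := by
  have hr : 0 ≤ e - bandProj z e := sub_nonneg.2 bandProj_le_self
  set d := bandProj z e ⊓ (e - bandProj z e)
  have hd : 0 ≤ d := le_inf (bandProj_nonneg he) hr
  have hpd : bandProj z e ≤ bandProj z e - d := bandProj_le fun n => by
    have h0 : 0 ≤ e ⊓ n • z := le_inf he (nsmul_nonneg hz n)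
    refine le_of_le_add_of_inf_eq_zero h0 (sub_nonneg.2 inf_le_left) hd ?_ ?_
    · rw [sub_add_cancel]
      exact inf_nsmul_le_bandProj z e n
    · refine inf_eq_zero_of_le_of_le h0 hd inf_le_right inf_le_right ?_
      rw [inf_comm]
      exact inf_nsmul_eq_zero hr hz (sub_bandProj_inf_eq_zero he hz) n
  exact ⟨bandProj_nonneg he, bandProj_le_self, le_antisymm ((le_sub_self_iff _).1 hpd) hd⟩

end BandProjection

section TensorLattice

variable {E F G : Type*}
  [Lattice E] [AddCommGroup E] [Module ℝ E] [AddLeftMono E]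
  [Lattice F] [AddCommGroup F] [Module ℝ F] [AddLeftMono F]
  [Lattice G] [AddCommGroup G] [Module ℝ G] [AddLeftMono G]
  {tmul : E →ₗ[ℝ] F →ₗ[ℝ] G}

lemma tmul_le_tmul (hpos : ∀ x y, 0 ≤ x → 0 ≤ y → 0 ≤ tmul x y) {x x' : E} {y y' : F}
    (hx : 0 ≤ x) (hy : 0 ≤ y) (hxx : x ≤ x') (hyy : y ≤ y') : tmul x y ≤ tmul x' y' := by
  have h₁ := hpos (x' - x) y (sub_nonneg.2 hxx) hy
  have h₂ := hpos x' (y' - y) (hx.trans hxx) (sub_nonneg.2 hyy)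
  rw [map_sub, LinearMap.sub_apply, sub_nonneg] at h₁
  rw [map_sub, sub_nonneg] at h₂
  exact h₁.trans h₂

lemma tmul_inf_tmul_eq_zero_left (hpos : ∀ x y, 0 ≤ x → 0 ≤ y → 0 ≤ tmul x y)
    (hinfl : ∀ (x x' : E) (y : F), 0 ≤ y → tmul (x ⊓ x') y = tmul x y ⊓ tmul x' y)
    {x x' : E} {y y' : F} (hx : 0 ≤ x) (hx' : 0 ≤ x') (hy : 0 ≤ y) (hy' : 0 ≤ y')
    (h : x ⊓ x' = 0) : tmul x y ⊓ tmul x' y' = 0 := by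
  refine le_antisymm ?_ (le_inf (hpos _ _ hx hy) (hpos _ _ hx' hy'))
  calc tmul x y ⊓ tmul x' y' ≤ tmul x (y ⊔ y') ⊓ tmul x' (y ⊔ y') :=
        inf_le_inf (tmul_le_tmul hpos hx hy le_rfl le_sup_left)
          (tmul_le_tmul hpos hx' hy' le_rfl le_sup_right)
    _ = 0 := by rw [← hinfl _ _ _ (hy.trans le_sup_left), h, map_zero, LinearMap.zero_apply]

lemma tmul_inf_tmul_eq_zero_right (hpos : ∀ x y, 0 ≤ x → 0 ≤ y → 0 ≤ tmul x y)
    (hinfr : ∀ (x : E) (y y' : F), 0 ≤ x → tmul x (y ⊓ y') = tmul x y ⊓ tmul x y')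
    {x x' : E} {y y' : F} (hx : 0 ≤ x) (hx' : 0 ≤ x') (hy : 0 ≤ y) (hy' : 0 ≤ y')
    (h : y ⊓ y' = 0) : tmul x y ⊓ tmul x' y' = 0 := by
  refine le_antisymm ?_ (le_inf (hpos _ _ hx hy) (hpos _ _ hx' hy'))
  calc tmul x y ⊓ tmul x' y' ≤ tmul (x ⊔ x') y ⊓ tmul (x ⊔ x') y' :=
        inf_le_inf (tmul_le_tmul hpos hx hy le_sup_left le_rfl)
          (tmul_le_tmul hpos hx' hy' le_sup_right le_rfl)
    _ = 0 := by rw [← hinfr _ _ _ (hx.trans le_sup_left), h, map_zero]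

lemma tmul_le_tmul_add_tmul_of_tmul_posPart_sub_eq_zero
    (hpos : ∀ x y, 0 ≤ x → 0 ≤ y → 0 ≤ tmul x y) {x e : E} {y f : F} (hx : 0 ≤ x) (hy : 0 ≤ y)
    (he : 0 ≤ e) (hf : 0 ≤ f) (h : tmul (x - e)⁺ (y - f)⁺ = 0) :
    tmul x y ≤ tmul x f + tmul e y :=
  calc tmul x y ≤ tmul ((x - e)⁺ + e) y :=
        tmul_le_tmul hpos hx hy (sub_le_iff_le_add.1 (le_posPart _)) le_rfl
    _ = tmul (x - e)⁺ y + tmul e y := by rw [map_add, LinearMap.add_apply]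
    _ ≤ tmul (x - e)⁺ ((y - f)⁺ + f) + tmul e y :=
        add_le_add_left (tmul_le_tmul hpos (posPart_nonneg _) hy le_rfl
          (sub_le_iff_le_add.1 (le_posPart _))) _
    _ = tmul (x - e)⁺ f + tmul e y := by rw [map_add, h, zero_add]
    _ ≤ tmul x f + tmul e y :=
        add_le_add_left (tmul_le_tmul hpos (posPart_nonneg _) hf
          (sup_le (sub_le_self x he) hx) le_rfl) _

end TensorLattice

section TensorComplete

variable {E F G : Type*}
  [ConditionallyCompleteLattice E] [AddCommGroup E] [Module ℝ E] [AddLeftMono E]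
  [ConditionallyCompleteLattice F] [AddCommGroup F] [Module ℝ F] [AddLeftMono F]
  [ConditionallyCompleteLattice G] [AddCommGroup G] [Module ℝ G] [AddLeftMono G]
  {tmul : E →ₗ[ℝ] F →ₗ[ℝ] G}

lemma tmul_inf_sub_tmul_eq_zero (hpos : ∀ x y, 0 ≤ x → 0 ≤ y → 0 ≤ tmul x y)
    (hinfl : ∀ (x x' : E) (y : F), 0 ≤ y → tmul (x ⊓ x') y = tmul x y ⊓ tmul x' y)
    (hinfr : ∀ (x : E) (y y' : F), 0 ≤ x → tmul x (y ⊓ y') = tmul x y ⊓ tmul x y')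
    {e p a : E} {f q b : F} (hp : IsComponent e p) (hq : IsComponent f q) (ha : 0 ≤ a)
    (hb : 0 ≤ b) (hap : a ⊓ (e - p) = 0) (hbq : b ⊓ (f - q) = 0) :
    tmul a b ⊓ (tmul e f - tmul p q) = 0 := by
  have hep : 0 ≤ e - p := sub_nonneg.2 hp.2.1
  have hfq : 0 ≤ f - q := sub_nonneg.2 hq.2.1
  have hdecomp : tmul e f - tmul p q =
      tmul (e - p) q + tmul p (f - q) + tmul (e - p) (f - q) := by
    simp only [map_sub, LinearMap.sub_apply]
    abel
  rw [hdecomp]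
  have hab := hpos a b ha hb
  refine inf_add_eq_zero hab (add_nonneg (hpos _ _ hep hq.1) (hpos _ _ hp.1 hfq))
    (hpos _ _ hep hfq) (inf_add_eq_zero hab (hpos _ _ hep hq.1) (hpos _ _ hp.1 hfq) ?_ ?_) ?_
  · exact tmul_inf_tmul_eq_zero_left hpos hinfl ha hep hb hq.1 hap
  · exact tmul_inf_tmul_eq_zero_right hpos hinfr ha hp.1 hb hfq hbq
  · exact tmul_inf_tmul_eq_zero_left hpos hinfl ha hep hb hfq hap

lemma isComponent_tmul (hpos : ∀ x y, 0 ≤ x → 0 ≤ y → 0 ≤ tmul x y)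
    (hinfl : ∀ (x x' : E) (y : F), 0 ≤ y → tmul (x ⊓ x') y = tmul x y ⊓ tmul x' y)
    (hinfr : ∀ (x : E) (y y' : F), 0 ≤ x → tmul x (y ⊓ y') = tmul x y ⊓ tmul x y')
    {e p : E} {f q : F} (hp : IsComponent e p) (hq : IsComponent f q) :
    IsComponent (tmul e f) (tmul p q) :=
  ⟨hpos _ _ hp.1 hq.1, tmul_le_tmul hpos hp.1 hq.1 hp.2.1 hq.2.1,
    tmul_inf_sub_tmul_eq_zero hpos hinfl hinfr hp hq hp.1 hq.1 hp.2.2 hq.2.2⟩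

lemma inf_tmul_le_tmul_bandProj (hpos : ∀ x y, 0 ≤ x → 0 ≤ y → 0 ≤ tmul x y)
    (hinfl : ∀ (x x' : E) (y : F), 0 ≤ y → tmul (x ⊓ x') y = tmul x y ⊓ tmul x' y)
    (hinfr : ∀ (x : E) (y y' : F), 0 ≤ x → tmul x (y ⊓ y') = tmul x y ⊓ tmul x y')
    {e z : E} {f w : F} (he : 0 ≤ e) (hf : 0 ≤ f) (hz : 0 ≤ z) (hw : 0 ≤ w) :
    tmul e f ⊓ tmul z w ≤ tmul (bandProj z e) (bandProj w f) := by
  have hp := isComponent_bandProj he hz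
  have hq := isComponent_bandProj hf hw
  have hpq := isComponent_tmul hpos hinfl hinfr hp hq
  have h0 : 0 ≤ tmul e f ⊓ tmul z w := le_inf (hpos _ _ he hf) (hpos _ _ hz hw)
  have hdisj : tmul z w ⊓ (tmul e f - tmul (bandProj z e) (bandProj w f)) = 0 :=
    tmul_inf_sub_tmul_eq_zero hpos hinfl hinfr hp hq hz hw
      (by rw [inf_comm]; exact sub_bandProj_inf_eq_zero he hz)
      (by rw [inf_comm]; exact sub_bandProj_inf_eq_zero hf hw)
  refine le_of_le_add_of_inf_eq_zero h0 hpq.1 (sub_nonneg.2 hpq.2.1) ?_ ?_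
  · rw [add_sub_cancel]
    exact inf_le_left
  · exact inf_eq_zero_of_le_of_le h0 (sub_nonneg.2 hpq.2.1) inf_le_right le_rfl hdisj

lemma exists_tmul_posPart_nsmul_sub_ne_zero (hpos : ∀ x y, 0 ≤ x → 0 ≤ y → 0 ≤ tmul x y)
    {x e : E} {y f : F} (hx : 0 ≤ x) (hy : 0 ≤ y) (he : 0 ≤ e) (hf : 0 ≤ f)
    (hxy : tmul x y ≠ 0) : ∃ m : ℕ, tmul (m • x - e)⁺ (m • y - f)⁺ ≠ 0 := by
  by_contra! h
  refine hxy (le_antisymm (nonpos_of_forall_nsmul_le (c := tmul x f + tmul e y) fun m => ?_)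
    (hpos _ _ hx hy))
  rcases eq_or_ne m 0 with rfl | hm
  · simpa using add_nonneg (hpos _ _ hx hf) (hpos _ _ he hy)
  refine le_of_nsmul_le_nsmul hm ?_
  simpa only [map_nsmul, LinearMap.smul_apply, nsmul_add] using
    tmul_le_tmul_add_tmul_of_tmul_posPart_sub_eq_zero hpos (nsmul_nonneg hx m)
      (nsmul_nonneg hy m) he hf (h m)

lemma exists_isComponent_tmul_ne_zero_le_nsmul (hpos : ∀ x y, 0 ≤ x → 0 ≤ y → 0 ≤ tmul x y)
    (hinfl : ∀ (x x' : E) (y : F), 0 ≤ y → tmul (x ⊓ x') y = tmul x y ⊓ tmul x' y)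
    (hinfr : ∀ (x : E) (y y' : F), 0 ≤ x → tmul x (y ⊓ y') = tmul x y ⊓ tmul x y')
    {e : E} {f : F} (he : 0 ≤ e) (hf : 0 ≤ f) (hwu : ∀ g : G, tmul e f ⊓ |g| = 0 → g = 0)
    {x : E} {y : F} (hx : 0 ≤ x) (hy : 0 ≤ y) (hxy : tmul x y ≠ 0) :
    ∃ (p : E) (q : F) (n : ℕ), IsComponent e p ∧ IsComponent f q ∧
      tmul p q ≠ 0 ∧ tmul p q ≤ n • tmul x y := by
  obtain ⟨m, hm⟩ := exists_tmul_posPart_nsmul_sub_ne_zero hpos hx hy he hf hxy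
  have hx₁ : 0 ≤ (m • x - e)⁺ := posPart_nonneg _
  have hy₁ : 0 ≤ (m • y - f)⁺ := posPart_nonneg _
  have hp := isComponent_bandProj he hx₁
  have hq := isComponent_bandProj hf hy₁
  refine ⟨_, _, m * m, hp, hq, fun h0 => hm (hwu _ ?_), ?_⟩
  · rw [abs_of_nonneg (hpos _ _ hx₁ hy₁)]
    exact le_antisymm (h0 ▸ inf_tmul_le_tmul_bandProj hpos hinfl hinfr he hf hx₁ hy₁)
      (le_inf (hpos _ _ he hf) (hpos _ _ hx₁ hy₁))
  · calc tmul (bandProj (m • x - e)⁺ e) (bandProj (m • y - f)⁺ f) ≤ tmul (m • x) (m • y) :=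
          tmul_le_tmul hpos hp.1 hq.1
            (bandProj_le (inf_nsmul_posPart_sub_le he (nsmul_nonneg hx m)))
            (bandProj_le (inf_nsmul_posPart_sub_le hf (nsmul_nonneg hy m)))
      _ = (m * m) • tmul x y := by rw [map_nsmul, map_nsmul, LinearMap.smul_apply, mul_nsmul]

end TensorComplete

theorem component_eq_sup_of_tmul_components_general
    {E F G : Type*}
    [ConditionallyCompleteLattice E] [AddCommGroup E] [Module ℝ E]
    [CovariantClass E E (· + ·) (· ≤ ·)]
    [ConditionallyCompleteLattice F] [AddCommGroup F] [Module ℝ F]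
    [CovariantClass F F (· + ·) (· ≤ ·)]
    [ConditionallyCompleteLattice G] [AddCommGroup G] [Module ℝ G]
    [CovariantClass G G (· + ·) (· ≤ ·)]
    (e : E) (he : 0 < e)
    (f : F) (hf : 0 < f)
    (tmul : E →ₗ[ℝ] F →ₗ[ℝ] G)
    (hpos : ∀ x y, 0 ≤ x → 0 ≤ y → 0 ≤ tmul x y)
    (hinfl : ∀ (x x' : E) (y : F), 0 ≤ y → tmul (x ⊓ x') y = tmul x y ⊓ tmul x' y)
    (hinfr : ∀ (x : E) (y y' : F), 0 ≤ x → tmul x (y ⊓ y') = tmul x y ⊓ tmul x y')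
    -- order density of `E ⊗ F` in the Dedekind completion `G`
    (hdense : ∀ g : G, 0 < g →
      ∃ x y, 0 ≤ x ∧ 0 ≤ y ∧ 0 < tmul x y ∧ tmul x y ≤ g)
    -- `e ⊗ f` is a weak order unit of `G`
    (hwuG : ∀ g : G, tmul e f ⊓ |g| = 0 → g = 0)
    (u : G) (hu : IsComponent (tmul e f) u) :
    IsLUB {w : G | ∃ p q, IsComponent e p ∧ IsComponent f q ∧
      tmul p q ≤ u ∧ w = tmul p q} u := by
  refine ⟨fun _ ⟨_, _, _, _, hpq, hw⟩ => hw ▸ hpq, fun b hb => ?_⟩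
  have hb0 : 0 ≤ b := by
    simpa using hb ⟨0, 0, isComponent_zero he.le, isComponent_zero hf.le, by simpa using hu.1, rfl⟩
  by_contra hub
  have hg : 0 < u - u ⊓ b :=
    (sub_nonneg.2 inf_le_left).lt_of_ne fun h => hub (inf_eq_left.1 (sub_eq_zero.1 h.symm).symm)
  obtain ⟨x, y, hx, hy, hxy, hxyg⟩ := hdense _ hg
  obtain ⟨p, q, m, hp, hq, hpq0, hpqm⟩ :=
    exists_isComponent_tmul_ne_zero_le_nsmul hpos hinfl hinfr he.le hf.le hwuG hx hy hxy.ne'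
  have hpqc := isComponent_tmul hpos hinfl hinfr hp hq
  have hpqu : tmul p q ≤ u := hu.le_of_le_nsmul hpqc.1 hpqc.2.1
    (hpqm.trans (nsmul_le_nsmul_right (hxyg.trans (sub_le_self u (le_inf hu.1 hb0))) m))
  have hpqb : tmul p q ≤ b := hb ⟨p, q, hp, hq, hpqu, rfl⟩
  have hdisj : tmul p q ⊓ (u - u ⊓ b) = 0 :=
    inf_eq_zero_of_le_of_le hpqc.1 hg.le le_rfl (sub_le_sub_left (le_inf hpqu hpqb) u)
      (hpqc.inf_sub_eq_zero_of_le hpqu hu.2.1)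
  exact hpq0 ((inf_eq_left.2 (hpqm.trans (nsmul_le_nsmul_right hxyg m))).symm.trans
    (inf_nsmul_eq_zero hpqc.1 hg.le hdisj m))

/-- every component `u` of `e ⊗ f` in the Dedekind completion `G` of the
Fremlin tensor product is the supremum of the components `p ⊗ q ≤ u` with `p` a
component of `e` and `q` a component of `f`. -/
theorem component_eq_sup_of_tmul_components
    {E F G : Type*}
    [ConditionallyCompleteLattice E] [AddCommGroup E] [Module ℝ E]
    [CovariantClass E E (· + ·) (· ≤ ·)]
    [ConditionallyCompleteLattice F] [AddCommGroup F] [Module ℝ F]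
    [CovariantClass F F (· + ·) (· ≤ ·)]
    [ConditionallyCompleteLattice G] [AddCommGroup G] [Module ℝ G]
    [CovariantClass G G (· + ·) (· ≤ ·)]
    (e : E) (he : 0 < e) (hwuE : ∀ x : E, e ⊓ |x| = 0 → x = 0)
    (f : F) (hf : 0 < f) (hwuF : ∀ y : F, f ⊓ |y| = 0 → y = 0)
    (tmul : E →ₗ[ℝ] F →ₗ[ℝ] G)
    (hpos : ∀ x y, 0 ≤ x → 0 ≤ y → 0 ≤ tmul x y)
    (hinfl : ∀ (x x' : E) (y : F), 0 ≤ y → tmul (x ⊓ x') y = tmul x y ⊓ tmul x' y)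
    (hinfr : ∀ (x : E) (y y' : F), 0 ≤ x → tmul x (y ⊓ y') = tmul x y ⊓ tmul x y')
    -- order density of `E ⊗ F` in the Dedekind completion `G`
    (hdense : ∀ g : G, 0 < g →
      ∃ x y, 0 ≤ x ∧ 0 ≤ y ∧ 0 < tmul x y ∧ tmul x y ≤ g)
    -- `e ⊗ f` is a weak order unit of `G`
    (hwuG : ∀ g : G, tmul e f ⊓ |g| = 0 → g = 0)
    (u : G) (hu : IsComponent (tmul e f) u) :
    IsLUB {w : G | ∃ p q, IsComponent e p ∧ IsComponent f q ∧
      tmul p q ≤ u ∧ w = tmul p q} u :=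
  component_eq_sup_of_tmul_components_general e he f hf tmul hpos hinfl hinfr hdense hwuG u hu
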